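/- arXiv:1610.09754 — 3 statements merged into one kernel-verified Lean document; each statement's English description precedes it below -/
import Mathlib

section
/- Let q be a prime power with q ≡ 1 (mod 4), t = (q-1)/4, and T a generator of the character group of F_q^×. Let a, b be integer multiples of t, and let λ ∈ F_q with λ^4 ≠ 1 and λ ≠ 0. Then ∑_{j=0}^{q-2} g(T^{j+a}) g(T^{-j+b}) T^j(-1) T^{4j}(λ) = (q-1) g(T^{a+b}) T^b(-1) T^{-(a+b)}(1-λ^4), where g denotes the Gauss sum with respect to a fixed nontrivial additive character θ. -/
lemma mc_zpow_apply {F : Type*} [Field F] (χ : MulChar F ℂ) (k : ℤ) {x : F} (hx : x ≠ 0) :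
    (χ ^ k) x = χ x ^ k := by
  cases k with
  | ofNat n =>
    rcases Nat.eq_zero_or_pos n with h | h
    · subst h
      simp [MulChar.one_apply (IsUnit.mk0 x hx)]
    · rw [Int.ofNat_eq_coe, zpow_natCast, zpow_natCast, MulChar.pow_apply' _ h.ne']
  | negSucc n =>
    rw [zpow_negSucc, zpow_negSucc, MulChar.inv_apply_eq_inv',
      MulChar.pow_apply' _ (Nat.succ_ne_zero n)]

lemma mc_zpow_zero {F : Type*} [Field F] (χ : MulChar F ℂ) (k : ℤ) :
    (χ ^ k) (0 : F) = 0 :=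
  MulChar.map_nonunit _ (by simp)

lemma mc_sum_range {F : Type*} [Field F] [Fintype F] [DecidableEq F] (q : ℕ) (hq : q = Fintype.card F)
    (T : MulChar F ℂ) (hT : ∀ χ : MulChar F ℂ, ∃ k : ℤ, χ = T ^ k) (u : F) :
    ∑ j ∈ Finset.range (q - 1), (T ^ (j : ℤ)) u = if u = 1 then ((q : ℂ) - 1) else 0 := by
  have hq2 : 2 ≤ q := hq ▸ Fintype.one_lt_card
  by_cases hu0 : u = 0
  · subst hu0
    simp only [mc_zpow_zero]
    rw [if_neg (by exact fun h => one_ne_zero h.symm)]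
    exact Finset.sum_const_zero
  · have hrw : ∀ j ∈ Finset.range (q - 1), (T ^ (j : ℤ)) u = T u ^ j := by
      intro j _
      rw [mc_zpow_apply T _ hu0, zpow_natCast]
    rw [Finset.sum_congr rfl hrw]
    by_cases hu1 : u = 1
    · subst hu1
      rw [if_pos rfl]
      simp only [map_one, one_pow, Finset.sum_const, Finset.card_range, nsmul_eq_mul, mul_one]
      rw [Nat.cast_sub (by omega)]
      norm_num
    · have hEnz : NeZero ((Monoid.exponent Fˣ : ℕ) : ℂ) :=
        ⟨Nat.cast_ne_zero.mpr Monoid.exponent_ne_zero_of_finite⟩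
      have hTu1 : T u ≠ 1 := by
        obtain ⟨χ, hχ⟩ := MulChar.exists_apply_ne_one_of_hasEnoughRootsOfUnity F ℂ hu1
        obtain ⟨k, rfl⟩ := hT χ
        rw [mc_zpow_apply T _ hu0] at hχ
        intro h
        rw [h, one_zpow] at hχ
        exact hχ rfl
      have hT1 : T ^ (q - 1) = 1 := by
        have := MulChar.pow_card_eq_one T (M := F)
        rwa [Fintype.card_units, ← hq] at this
      have hTun : T u ^ (q - 1) = 1 := by
        rw [← MulChar.pow_apply' T (by omega : q - 1 ≠ 0), hT1,
          MulChar.one_apply (IsUnit.mk0 u hu0)]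
      rw [if_neg hu1, geom_sum_eq hTu1, hTun, sub_self, zero_div]

theorem stmt0 {F : Type*} [Field F] [Fintype F] [DecidableEq F]
    (ψ : AddChar F ℂ) (hψ : ψ ≠ 1)
    (q : ℕ) (hq : q = Fintype.card F) (hq4 : q % 4 = 1)
    (t : ℕ) (ht : t = (q - 1) / 4)
    (T : MulChar F ℂ) (hT : ∀ χ : MulChar F ℂ, ∃ k : ℤ, χ = T ^ k)
    (a b : ℤ) (ha : (t : ℤ) ∣ a) (hb : (t : ℤ) ∣ b)
    (lam : F) (hlam0 : lam ≠ 0) (hlam : lam ^ 4 ≠ 1) :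
    ∑ j ∈ Finset.range (q - 1),
        gaussSum (T ^ ((j : ℤ) + a)) ψ * gaussSum (T ^ (-(j : ℤ) + b)) ψ *
          (T ^ (j : ℤ)) (-1) * (T ^ (4 * (j : ℤ))) lam
      = ((q : ℂ) - 1) * gaussSum (T ^ (a + b)) ψ * (T ^ b) (-1) *
          (T ^ (-(a + b))) (1 - lam ^ 4) := by
  have hq2 : 2 ≤ q := hq ▸ Fintype.one_lt_card
  have h4t : 4 * t = q - 1 := by omega
  have hqt : (q : ℤ) - 1 = 4 * (t : ℤ) := by omega
  -- T^k = 1 whenever (q-1) ∣ k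
  have hT1 : ∀ k : ℤ, ((q : ℤ) - 1) ∣ k → T ^ k = 1 := by
    rintro k ⟨m, hm⟩
    have hbase : T ^ ((q : ℤ) - 1) = 1 := by
      have h := MulChar.pow_card_eq_one T (M := F)
      rw [Fintype.card_units, ← hq] at h
      have he : ((q : ℤ) - 1) = ((q - 1 : ℕ) : ℤ) := by omega
      rw [he, zpow_natCast, h]
    rw [hm, zpow_mul, hbase, one_zpow]
  have hl4 : lam ^ 4 ≠ 0 := pow_ne_zero _ hlam0
  set c : F := -(lam ^ 4)⁻¹ with hc_def
  have hc0 : c ≠ 0 := by simp [hc_def, hl4]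
  set d : F := c + 1 with hd_def
  have hd0 : d ≠ 0 := by
    rw [hd_def, hc_def]
    intro h
    apply hlam
    have h1 : (lam ^ 4)⁻¹ = 1 := by linear_combination -h
    rw [inv_eq_one] at h1
    exact h1
  set A : F → ℂ := fun x => (T ^ a) x * ψ x with hA
  set B : F → ℂ := fun y => (T ^ b) y * ψ y with hB
  -- Step 1: expand the Gauss sums
  have key : ∀ j ∈ Finset.range (q - 1),
      gaussSum (T ^ ((j : ℤ) + a)) ψ * gaussSum (T ^ (-(j : ℤ) + b)) ψ *
          (T ^ (j : ℤ)) (-1) * (T ^ (4 * (j : ℤ))) lam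
        = ∑ x : F, ∑ y : F, A x * B y * (T ^ (j : ℤ)) (x * y⁻¹ * (-1) * lam ^ 4) := by
    intro j _
    rw [gaussSum, gaussSum, Finset.sum_mul_sum, Finset.sum_mul, Finset.sum_mul]
    refine Finset.sum_congr rfl fun x _ => ?_
    rw [Finset.sum_mul, Finset.sum_mul]
    refine Finset.sum_congr rfl fun y _ => ?_
    have e1 : (T ^ ((j : ℤ) + a)) x = (T ^ (j : ℤ)) x * (T ^ a) x := by
      rw [zpow_add, MulChar.mul_apply]
    have e2 : (T ^ (-(j : ℤ) + b)) y = (T ^ (j : ℤ)) y⁻¹ * (T ^ b) y := by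
      rw [zpow_add, MulChar.mul_apply, zpow_neg, MulChar.inv_apply']
    have e3 : (T ^ (4 * (j : ℤ))) lam = (T ^ (j : ℤ)) (lam ^ 4) := by
      rw [show (4 * (j : ℤ)) = (j : ℤ) * 4 by ring, zpow_mul,
        mc_zpow_apply _ _ hlam0, map_pow]
      norm_cast
    rw [e1, e2, e3, map_mul, map_mul, map_mul, hA, hB]
    ring
  rw [Finset.sum_congr rfl key]
  -- Step 2: swap sums and apply the character sum
  rw [Finset.sum_comm]
  have step2 : ∀ x : F, ∑ j ∈ Finset.range (q - 1), ∑ y : F,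
      A x * B y * (T ^ (j : ℤ)) (x * y⁻¹ * (-1) * lam ^ 4)
      = ∑ y : F, A x * B y * (if x * y⁻¹ * (-1) * lam ^ 4 = 1 then ((q : ℂ) - 1) else 0) := by
    intro x
    rw [Finset.sum_comm]
    refine Finset.sum_congr rfl fun y _ => ?_
    rw [← Finset.mul_sum, mc_sum_range q hq T hT]
  rw [Finset.sum_congr rfl fun x _ => step2 x]
  -- Step 3: collapse the double sum to a single sum
  rw [Finset.sum_comm]
  have step3 : ∀ y : F, ∑ x : F, A x * B y * (if x * y⁻¹ * (-1) * lam ^ 4 = 1 then ((q : ℂ) - 1) else 0)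
      = A (c * y) * B y * ((q : ℂ) - 1) := by
    intro y
    by_cases hy : y = 0
    · subst hy
      have hB0 : B 0 = 0 := by
        simp [hB, mc_zpow_zero]
      simp [hB0]
    · have hiff : ∀ x : F, x * y⁻¹ * (-1) * lam ^ 4 = 1 ↔ x = c * y := by
        intro x
        rw [hc_def]
        constructor
        · intro h
          field_simp at h ⊢
          linear_combination -h
        · intro h
          subst h
          field_simp
      calc ∑ x : F, A x * B y * (if x * y⁻¹ * (-1) * lam ^ 4 = 1 then ((q : ℂ) - 1) else 0)
          = ∑ x : F, (if x = c * y then A x * B y * ((q : ℂ) - 1) else 0) := by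
            refine Finset.sum_congr rfl fun x _ => ?_
            rw [if_congr (hiff x) rfl rfl, mul_ite, mul_zero]
        _ = A (c * y) * B y * ((q : ℂ) - 1) := by
            rw [Finset.sum_ite_eq' Finset.univ (c * y) (fun x => A x * B y * ((q : ℂ) - 1))]
            simp
  rw [Finset.sum_congr rfl fun y _ => step3 y]
  -- Step 4: evaluate the remaining sum as a Gauss sum
  have hAc : ∀ y : F, A (c * y) * B y = (T ^ a) c * ((T ^ (a + b)) y * ψ (d * y)) := by
    intro y
    rw [hA, hB]
    simp only [map_mul]
    rw [zpow_add, MulChar.mul_apply]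
    have : ψ (c * y) * ψ y = ψ (d * y) := by
      rw [← AddChar.map_add_eq_mul, hd_def]
      ring_nf
    rw [← this]
    ring
  have hsum4 : ∑ y : F, (T ^ (a + b)) y * ψ (d * y) = (T ^ (-(a + b))) d * gaussSum (T ^ (a + b)) ψ := by
    have hdu : IsUnit d := IsUnit.mk0 d hd0
    have hgs := gaussSum_mulShift (T ^ (a + b)) ψ hdu.unit
    have hne : (T ^ (a + b)) d ≠ 0 := by
      intro h
      have h1 : (T ^ (a + b)) d * (T ^ (a + b)) d⁻¹ = 1 := by
        rw [← map_mul, mul_inv_cancel₀ hd0, map_one]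
      rw [h, zero_mul] at h1
      exact zero_ne_one h1
    have hunit : (hdu.unit : F) = d := IsUnit.unit_spec hdu
    rw [hunit] at hgs
    have e : ∑ y : F, (T ^ (a + b)) y * ψ (d * y) = gaussSum (T ^ (a + b)) (ψ.mulShift d) := by
      simp [gaussSum, AddChar.mulShift_apply]
    rw [e, zpow_neg, MulChar.inv_apply_eq_inv', eq_inv_mul_iff_mul_eq₀ hne]
    exact hgs
  -- Step 5: the final character identity
  have hdc : d = c * (1 - lam ^ 4) := by
    rw [hd_def, hc_def]
    field_simp
    ring
  have hcomb : (T ^ a) c * (T ^ (-(a + b))) c = (T ^ (-b)) c := by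
    rw [← MulChar.mul_apply, ← zpow_add, show a + -(a + b) = -b by ring]
  have hTc : (T ^ (-b)) c = (T ^ b) (-1) := by
    have hc_eq : c = (-1) * (lam⁻¹) ^ 4 := by
      rw [hc_def]
      field_simp
    rw [hc_eq, map_mul]
    have h4b : (T ^ (-b)) ((lam⁻¹) ^ 4) = 1 := by
      rw [map_pow, mc_zpow_apply _ _ (inv_ne_zero hlam0), ← zpow_natCast, ← zpow_mul,
        ← mc_zpow_apply _ _ (inv_ne_zero hlam0)]
      have hdvd : ((q : ℤ) - 1) ∣ (-b * ((4 : ℕ) : ℤ)) := by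
        obtain ⟨m, hm⟩ := hb
        exact ⟨-m, by rw [hm, hqt]; push_cast; ring⟩
      rw [hT1 _ hdvd, MulChar.one_apply ((IsUnit.mk0 _ (inv_ne_zero hlam0)))]
    rw [h4b, mul_one]
    have h1 : (T ^ b) (-1) * (T ^ b) (-1) = 1 := by
      rw [← map_mul, neg_mul_neg, one_mul, map_one]
    have h2 : (T ^ (-b)) (-1) * (T ^ b) (-1) = 1 := by
      rw [← MulChar.mul_apply, ← zpow_add, show -b + b = 0 by ring, zpow_zero,
        MulChar.one_apply (IsUnit.mk0 (-1 : F) (by norm_num))]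
    exact mul_right_cancel₀ (fun h0 => by rw [h0, mul_zero] at h1; exact zero_ne_one h1)
      (h2.trans h1.symm)
  calc ∑ y : F, A (c * y) * B y * ((q : ℂ) - 1)
      = ((T ^ a) c * ((q : ℂ) - 1)) * ∑ y : F, (T ^ (a + b)) y * ψ (d * y) := by
        rw [Finset.mul_sum]
        refine Finset.sum_congr rfl fun y _ => ?_
        rw [hAc y]
        ring
    _ = ((T ^ a) c * ((q : ℂ) - 1)) * ((T ^ (-(a + b))) d * gaussSum (T ^ (a + b)) ψ) := by
        rw [hsum4]
    _ = ((q : ℂ) - 1) * gaussSum (T ^ (a + b)) ψ * (T ^ b) (-1) *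
          (T ^ (-(a + b))) (1 - lam ^ 4) := by
        rw [hdc, map_mul]
        rw [show (T ^ a) c * ((q:ℂ) - 1) * ((T ^ (-(a+b))) c * (T ^ (-(a+b))) (1 - lam ^ 4) * gaussSum (T ^ (a+b)) ψ) = ((T ^ a) c * (T ^ (-(a+b))) c) * ((q:ℂ) - 1) * ((T ^ (-(a+b))) (1 - lam ^ 4) * gaussSum (T ^ (a+b)) ψ) by ring, hcomb, hTc]
        ring
end

section
/- Let d be an odd integer, q ≡ 1 (mod d) a prime power, t = (q-1)/d, and T a generator of the character group of F_q^×. Then ∏_{k=1}^{d-1} g(T^{kt}) = q^{(d-1)/2} · T^{α}(-1), where α = t·(d-1)(d+1)/8 and g denotes Gauss sums with respect to a fixed nontrivial additive character. -/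
theorem stmt13 {F : Type*} [Field F] [Fintype F]
    (ψ : AddChar F ℂ) (hψ : ψ ≠ 1)
    (q d : ℕ) (hq : q = Fintype.card F) (hdo : Odd d) (hdq : d ∣ q - 1)
    (t : ℕ) (ht : t = (q - 1) / d)
    (T : MulChar F ℂ) (hT : ∀ χ : MulChar F ℂ, ∃ k : ℕ, χ = T ^ k) :
    ∏ k ∈ Finset.Icc 1 (d - 1), gaussSum (T ^ (k * t)) ψ
      = (q : ℂ) ^ ((d - 1) / 2) * (T ^ (t * ((d - 1) * (d + 1)) / 8)) (-1) := by
  classical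
  have hψp : ψ.IsPrimitive := AddChar.IsPrimitive.of_ne_one hψ
  have hq2 : 2 ≤ q := by rw [hq]; exact Fintype.one_lt_card
  obtain ⟨c, hc⟩ := hdo
  set m := (d - 1) / 2 with hm
  have hmd : d = 2 * m + 1 := by omega
  have hdt : d * t = q - 1 := by rw [ht]; exact Nat.mul_div_cancel' hdq
  have ht0 : 0 < t := by
    rcases Nat.eq_zero_or_pos t with h | h
    · rw [h, Nat.mul_zero] at hdt; omega
    · exact h
  have : NeZero (Monoid.exponent Fˣ) := ⟨Monoid.exponent_ne_zero_of_finite⟩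
  -- order of T
  have hord : orderOf T = q - 1 := by
    have h1 : (⊤ : Subgroup (MulChar F ℂ)) = Subgroup.zpowers T := by
      symm; rw [Subgroup.eq_top_iff']
      intro χ
      obtain ⟨k, hk⟩ := hT χ
      rw [hk, ← zpow_natCast]
      exact Subgroup.zpow_mem_zpowers T k
    have h2 := MulChar.card_eq_card_units_of_hasEnoughRootsOfUnity F ℂ
    rw [← Nat.card_zpowers, ← h1, Subgroup.card_top, h2, Nat.card_units,
      Nat.card_eq_fintype_card, hq]
  have hne : ∀ k, 1 ≤ k → k ≤ d - 1 → T ^ (k * t) ≠ 1 := by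
    intro k hk1 hk2 h
    have hdvd := orderOf_dvd_of_pow_eq_one h
    rw [hord] at hdvd
    have hlt : k * t < q - 1 := by
      calc k * t ≤ (d - 1) * t := Nat.mul_le_mul_right t hk2
        _ < d * t := by
            apply Nat.mul_lt_mul_of_lt_of_le (by omega) le_rfl ht0
        _ = q - 1 := hdt
    have hpos : 0 < k * t := Nat.mul_pos hk1 ht0
    exact absurd (Nat.le_of_dvd (by omega) hdvd) (by omega)
  -- pairing
  have hpair : ∀ k, 1 ≤ k → k ≤ m →
      gaussSum (T ^ (k * t)) ψ * gaussSum (T ^ ((d - k) * t)) ψ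
        = T (-1) ^ (k * t) * (q : ℂ) := by
    intro k hk1 hk2
    have hχ : T ^ (k * t) ≠ 1 := hne k hk1 (by omega)
    have hinv : T ^ ((d - k) * t) = (T ^ (k * t))⁻¹ := by
      apply eq_inv_of_mul_eq_one_left
      rw [← pow_add]
      have h : (d - k) * t + k * t = d * t := by
        rw [← Nat.add_mul]; congr 1; omega
      rw [h, hdt, ← hord, pow_orderOf_eq_one]
    rw [hinv, ← mul_gaussSum_inv_eq_gaussSum ((T ^ (k * t))⁻¹) ψ, mul_left_comm,
      gaussSum_mul_gaussSum_eq_card hχ hψp, MulChar.inv_apply', inv_neg_one,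
      MulChar.pow_apply' _ (by positivity) (-1 : F), hq]
  -- split and reindex the product
  have hre : ∏ k ∈ Finset.Ioc m (d - 1), gaussSum (T ^ (k * t)) ψ
      = ∏ k ∈ Finset.Icc 1 m, gaussSum (T ^ ((d - k) * t)) ψ := by
    apply Finset.prod_bij' (fun k _ => d - k) (fun k _ => d - k)
    · intro a ha
      simp only [Finset.mem_Ioc] at ha
      simp only [Finset.mem_Icc]; omega
    · intro a ha
      simp only [Finset.mem_Icc] at ha
      simp only [Finset.mem_Ioc]; omega
    · intro a ha; simp only [Finset.mem_Ioc] at ha; omega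
    · intro a ha; simp only [Finset.mem_Icc] at ha; omega
    · intro a ha
      simp only [Finset.mem_Ioc] at ha
      congr 3
      omega
  have hsplit : ∏ k ∈ Finset.Icc 1 (d - 1), gaussSum (T ^ (k * t)) ψ
      = ∏ k ∈ Finset.Icc 1 m,
          (gaussSum (T ^ (k * t)) ψ * gaussSum (T ^ ((d - k) * t)) ψ) := by
    have hset : Finset.Icc 1 (d - 1) = Finset.Icc 1 m ∪ Finset.Ioc m (d - 1) := by
      ext a
      simp only [Finset.mem_Icc, Finset.mem_union, Finset.mem_Ioc]
      omega
    have hdisj : Disjoint (Finset.Icc 1 m) (Finset.Ioc m (d - 1)) := by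
      rw [Finset.disjoint_left]
      intro a ha ha'
      simp only [Finset.mem_Icc] at ha
      simp only [Finset.mem_Ioc] at ha'
      omega
    rw [hset, Finset.prod_union hdisj, hre, ← Finset.prod_mul_distrib]
  rw [hsplit, Finset.prod_congr rfl fun k hk => by
    simp only [Finset.mem_Icc] at hk; exact hpair k hk.1 hk.2]
  rw [Finset.prod_mul_distrib, Finset.prod_const, Nat.card_Icc, Finset.prod_pow_eq_pow_sum]
  -- exponents
  have hS : (∑ k ∈ Finset.Icc 1 m, k * t) = (∑ k ∈ Finset.Icc 1 m, k) * t :=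
    (Finset.sum_mul _ _ _).symm
  have hS2 : (∑ k ∈ Finset.Icc 1 m, k) * 2 = m * (m + 1) := by
    have h1 : (∑ k ∈ Finset.range (m + 1), k) = ∑ k ∈ Finset.Icc 1 m, k := by
      have : Finset.range (m + 1) = insert 0 (Finset.Icc 1 m) := by
        ext a
        simp only [Finset.mem_range, Finset.mem_insert, Finset.mem_Icc]
        omega
      rw [this, Finset.sum_insert (by simp), Nat.zero_add]
    rw [← h1, Finset.sum_range_id_mul_two]
    simp [Nat.mul_comm]
  have hα : t * ((d - 1) * (d + 1)) / 8 = ∑ k ∈ Finset.Icc 1 m, k * t := by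
    have h8 : t * ((d - 1) * (d + 1)) = 8 * ((∑ k ∈ Finset.Icc 1 m, k) * t) := by
      have : (d - 1) * (d + 1) = 2 * m * (2 * m + 2) := by
        rw [hmd, Nat.add_sub_cancel]
      rw [this]
      have h2 : 2 * m * (2 * m + 2) = 4 * (m * (m + 1)) := by ring
      rw [h2, ← hS2]; ring
    rw [h8, Nat.mul_div_cancel_left _ (by norm_num), hS]
  rw [hα]
  have hval : (T ^ (∑ k ∈ Finset.Icc 1 m, k * t)) (-1 : F)
      = T (-1 : F) ^ (∑ k ∈ Finset.Icc 1 m, k * t) := by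
    have hcoe : ((-1 : Fˣ) : F) = (-1 : F) := by simp
    rw [← hcoe, MulChar.pow_apply_coe]
  rw [hval]
  simp only [Nat.add_sub_cancel]
  ring
end

section
/- Let d be an even integer ≥ 2, q ≡ 1 (mod d) a prime power, t = (q-1)/d, and T a generator of the character group of F_q^×. Then ∏_{k=1}^{d-1} g(T^{kt}) = q^{(d-2)/2} · g(T^{(d/2)t}) · T^{α'}(-1), where α' = t·d(d-2)/8. -/
/-!
Since `T ^ (d * t) = T ^ (q - 1) = 1`, the factors for `k` and `d - k` are Gauss sums of mutually
inverse nontrivial characters, and `g(χ) g(χ⁻¹) = χ(-1) q`. Pairing `k` with `d - k` leaves the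
middle factor `k = d / 2` alone and produces `q ^ (d / 2 - 1)` times `T(-1) ^ (t * ∑ k)`, the sum
running over `1 ≤ k < d / 2`; that sum is `d (d - 2) / 8`.
-/

open Finset

theorem Finset.prod_Ico_one_two_mul {M : Type*} [CommMonoid M] (f : ℕ → M) {m : ℕ} (hm : 0 < m) :
    ∏ k ∈ Ico 1 (2 * m), f k = f m * ∏ k ∈ Ico 1 m, f k * f (2 * m - k) := by
  have hupper : ∏ k ∈ Ico (m + 1) (2 * m), f k = ∏ k ∈ Ico 1 m, f (2 * m - k) :=
    prod_nbij' (fun k ↦ 2 * m - k) (fun k ↦ 2 * m - k) (by intro k hk; simp only [mem_Ico] at hk ⊢; omega)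
      (by intro k hk; simp only [mem_Ico] at hk ⊢; omega) (by intro k hk; simp only [mem_Ico] at hk; omega)
      (by intro k hk; simp only [mem_Ico] at hk; omega) (by intro k hk; simp only [mem_Ico] at hk; congr 1; omega)
  rw [← prod_Ico_consecutive f (by omega : 1 ≤ m) (by omega : m ≤ 2 * m),
    prod_eq_prod_Ico_succ_bot (by omega : m < 2 * m), hupper, prod_mul_distrib, mul_left_comm]

theorem Finset.sum_Ico_one_id_mul_two (m : ℕ) : (∑ k ∈ Ico 1 m, k) * 2 = m * (m - 1) := by
  rw [← sum_range_id_mul_two, range_eq_Ico]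
  rcases Nat.eq_zero_or_pos m with rfl | hm
  · rfl
  · rw [sum_eq_sum_Ico_succ_bot hm, zero_add]

theorem gaussSum_mul_gaussSum_of_mul_eq_one {R R' : Type*} [Field R] [Fintype R] [CommRing R']
    [IsDomain R'] {χ χ' : MulChar R R'} (hχ : χ ≠ 1) (h : χ * χ' = 1)
    {ψ : AddChar R R'} (hψ : ψ.IsPrimitive) :
    gaussSum χ ψ * gaussSum χ' ψ = χ (-1) * Fintype.card R := by
  rw [← inv_eq_of_mul_eq_one_right h, ← mul_gaussSum_inv_eq_gaussSum χ⁻¹, mul_left_comm,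
    gaussSum_mul_gaussSum_eq_card hχ hψ, MulChar.inv_apply', inv_neg_one]

theorem gaussSum_pow_mul_gaussSum_pow_orderOf_sub {R R' : Type*} [Field R] [Fintype R]
    [CommRing R'] [IsDomain R'] {χ : MulChar R R'} {ψ : AddChar R R'} (hψ : ψ.IsPrimitive)
    {k : ℕ} (hk0 : 0 < k) (hk : k < orderOf χ) :
    gaussSum (χ ^ k) ψ * gaussSum (χ ^ (orderOf χ - k)) ψ = χ (-1) ^ k * Fintype.card R := by
  have hinv : χ ^ k * χ ^ (orderOf χ - k) = 1 := by
    rw [← pow_add, Nat.add_sub_cancel' hk.le, pow_orderOf_eq_one]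
  rw [gaussSum_mul_gaussSum_of_mul_eq_one (pow_ne_one_of_lt_orderOf hk0.ne' hk) hinv hψ,
    ← Units.coe_neg_one, MulChar.pow_apply_coe]

theorem MulChar.orderOf_eq_card_sub_one {F R : Type*} [Field F] [Fintype F] [CommRing R]
    [HasEnoughRootsOfUnity R (Monoid.exponent Fˣ)] {T : MulChar F R}
    (hT : ∀ χ : MulChar F R, ∃ k : ℕ, χ = T ^ k) : orderOf T = Fintype.card F - 1 := by
  rw [orderOf_eq_card_of_forall_mem_zpowers fun χ ↦ ?_,
    MulChar.card_eq_card_units_of_hasEnoughRootsOfUnity, Nat.card_units, Nat.card_eq_fintype_card]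
  obtain ⟨k, rfl⟩ := hT χ
  exact ⟨k, zpow_natCast T k⟩

theorem stmt14_general {F : Type*} [Field F] [Fintype F]
    (ψ : AddChar F ℂ) (hψ : ψ ≠ 1)
    (q d : ℕ) (hq : q = Fintype.card F) (hde : Even d) (hdq : d ∣ q - 1)
    (t : ℕ) (ht : t = (q - 1) / d)
    (T : MulChar F ℂ) (hT : ∀ χ : MulChar F ℂ, ∃ k : ℕ, χ = T ^ k) :
    ∏ k ∈ Finset.Icc 1 (d - 1), gaussSum (T ^ (k * t)) ψ
      = (q : ℂ) ^ ((d - 2) / 2) * gaussSum (T ^ ((d / 2) * t)) ψ *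
          (T ^ (t * (d * (d - 2)) / 8)) (-1) := by
  obtain ⟨m, rfl⟩ := hde.two_dvd
  have hdt : 2 * m * t = orderOf T := by
    rw [MulChar.orderOf_eq_card_sub_one hT, ← hq, ht, Nat.mul_div_cancel' hdq]
  have hpos : 0 < 2 * m * t := by
    have := Fintype.one_lt_card (α := F)
    rw [hdt, MulChar.orderOf_eq_card_sub_one hT]
    omega
  obtain ⟨hm, ht0⟩ := CanonicallyOrderedAdd.mul_pos.mp hpos
  have hpair : ∀ k ∈ Ico 1 m,
      gaussSum (T ^ (k * t)) ψ * gaussSum (T ^ ((2 * m - k) * t)) ψ = T (-1) ^ (k * t) * q := by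
    intro k hk
    have hk : 1 ≤ k ∧ k < m := by simpa using hk
    rw [hq, Nat.sub_mul, hdt]
    exact gaussSum_pow_mul_gaussSum_pow_orderOf_sub (AddChar.IsPrimitive.of_ne_one hψ)
      (mul_pos (by omega) ht0) (hdt ▸ Nat.mul_lt_mul_of_pos_right (by omega) ht0)
  have hexp : t * (2 * m * (2 * m - 2)) / 8 = (∑ k ∈ Ico 1 m, k) * t := by
    have hsum := sum_Ico_one_id_mul_two m
    rw [show t * (2 * m * (2 * m - 2)) = (∑ k ∈ Ico 1 m, k) * t * 8 by
      rw [show 2 * m - 2 = 2 * (m - 1) by omega]; nlinarith, Nat.mul_div_cancel _ (by norm_num)]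
  calc ∏ k ∈ Icc 1 (2 * m - 1), gaussSum (T ^ (k * t)) ψ
      = gaussSum (T ^ (m * t)) ψ *
          ∏ k ∈ Ico 1 m, gaussSum (T ^ (k * t)) ψ * gaussSum (T ^ ((2 * m - k) * t)) ψ := by
        rw [Icc_sub_one_right_eq_Ico_of_not_isMin (by simpa using hm.ne'),
          prod_Ico_one_two_mul _ (by omega)]
    _ = gaussSum (T ^ (m * t)) ψ * ∏ k ∈ Ico 1 m, T (-1) ^ (k * t) * q := by
        rw [prod_congr rfl hpair]
    _ = q ^ (m - 1) * gaussSum (T ^ (m * t)) ψ * T (-1) ^ ((∑ k ∈ Ico 1 m, k) * t) := by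
        rw [prod_mul_distrib, prod_const, Nat.card_Ico, prod_pow_eq_pow_sum, sum_mul]
        ring
    _ = _ := by
        rw [show (2 * m - 2) / 2 = m - 1 by omega, Nat.mul_div_cancel_left m two_pos, hexp,
          ← Units.coe_neg_one, MulChar.pow_apply_coe]

theorem stmt14 {F : Type*} [Field F] [Fintype F]
    (ψ : AddChar F ℂ) (hψ : ψ ≠ 1)
    (q d : ℕ) (hq : q = Fintype.card F) (hd : 2 ≤ d) (hde : Even d) (hdq : d ∣ q - 1)
    (t : ℕ) (ht : t = (q - 1) / d)
    (T : MulChar F ℂ) (hT : ∀ χ : MulChar F ℂ, ∃ k : ℕ, χ = T ^ k) :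
    ∏ k ∈ Finset.Icc 1 (d - 1), gaussSum (T ^ (k * t)) ψ
      = (q : ℂ) ^ ((d - 2) / 2) * gaussSum (T ^ ((d / 2) * t)) ψ *
          (T ^ (t * (d * (d - 2)) / 8)) (-1) :=
  stmt14_general ψ hψ q d hq hde hdq t ht T hT
end
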